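/- Let i, j, k, l be integers with gcd(i,j) = 1 and gcd(k,l) = 1. Let G be the group presented by generators x, y, a, b and relators xy = yx, ab = ba, xⁱyʲ = aᵏbˡ. Then every subgroup S of G (not necessarily finitely generated) either admits a surjective group homomorphism onto the free group F₂ of rank 2 or is isomorphic to the trivial group, to ℤ, or to ℤ × ℤ. -/

import Mathlib

/-- Generators `x, y, a, b`. -/
def x4 : FreeGroup (Fin 4) := FreeGroup.of 0
def y4 : FreeGroup (Fin 4) := FreeGroup.of 1
def a4 : FreeGroup (Fin 4) := FreeGroup.of 2
def b4 : FreeGroup (Fin 4) := FreeGroup.of 3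

/-- Relators `xy = yx`, `ab = ba`, `xⁱyʲ = aᵏbˡ`. -/
def rels4 (i j k l : ℤ) : Set (FreeGroup (Fin 4)) :=
  {x4 * y4 * (y4 * x4)⁻¹, a4 * b4 * (b4 * a4)⁻¹, x4 ^ i * y4 ^ j * (a4 ^ k * b4 ^ l)⁻¹}

/-!
Write `z = xⁱyʲ = aᵏbˡ` for the generator of the edge group. It is central, and killing it turns
each vertex group `ℤ²` into `ℤ` (the edge group is a maximal cyclic subgroup), so `G/⟨z⟩` is the
free group `ℤ * ℤ`; a homomorphism to `ℤ` sending `z` to `1` shows that `z` has infinite order.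
For a subgroup `S`, the image of `S` in `F₂` is free (Nielsen–Schreier). If its rank is at least
two, `S` surjects onto `F₂`. Otherwise the image is cyclic, so `S` is generated by one lift of a
generator and one generator of `S ∩ ⟨z⟩`, which commute: `S` is a quotient of `ℤ²`, torsion-free
because `G` is, hence trivial, `ℤ` or `ℤ²`.
-/

theorem Commute.zpow_bezout_mul_zpow_left {M : Type*} [Group M] {x y : M} (h : Commute x y)
    {i j p q : ℤ} (hpq : p * i + q * j = 1) :
    (x ^ q * y ^ (-p)) ^ j = x * (x ^ i * y ^ j) ^ (-p) := by
  rw [(h.zpow_zpow q (-p)).mul_zpow, (h.zpow_zpow i j).mul_zpow, ← zpow_mul, ← zpow_mul,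
    ← zpow_mul, ← zpow_mul, ← mul_assoc, ← zpow_one_add]
  congr 2
  · linear_combination hpq
  · ring

theorem Commute.zpow_bezout_mul_zpow_right {M : Type*} [Group M] {x y : M} (h : Commute x y)
    {i j p q : ℤ} (hpq : p * i + q * j = 1) :
    (x ^ q * y ^ (-p)) ^ (-i) = y * (x ^ i * y ^ j) ^ (-q) := by
  rw [(h.zpow_zpow q (-p)).mul_zpow, (h.zpow_zpow i j).mul_zpow, ← zpow_mul, ← zpow_mul,
    ← zpow_mul, ← zpow_mul, ← mul_assoc, ((h.zpow_left _).eq).symm, mul_assoc, ← zpow_one_add]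
  congr 2
  · ring
  · linear_combination hpq

theorem Subgroup.normal_zpowers_of_commute {G : Type*} [Group G] {z : G}
    (hz : ∀ g, Commute z g) : (Subgroup.zpowers z).Normal where
  conj_mem n hn g := by
    obtain ⟨m, rfl⟩ := Subgroup.mem_zpowers_iff.mp hn
    rwa [← ((hz g).zpow_left m).eq, mul_inv_cancel_right]

theorem IsFreeGroup.exists_surjective_freeGroup_fin_two_or_isCyclic (H : Type*) [Group H]
    [IsFreeGroup H] : (∃ f : H →* FreeGroup (Fin 2), Function.Surjective f) ∨ IsCyclic H := by
  classical
  let e := IsFreeGroup.toFreeGroup H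
  rcases subsingleton_or_nontrivial (IsFreeGroup.Generators H) with hsub | hnt
  · have : IsCyclic (FreeGroup (IsFreeGroup.Generators H)) := by
      rcases isEmpty_or_nonempty (IsFreeGroup.Generators H) with hemp | ⟨⟨b⟩⟩
      · infer_instance
      · have := uniqueOfSubsingleton b
        infer_instance
    exact .inr (isCyclic_of_surjective e.symm.toMonoidHom e.symm.surjective)
  · obtain ⟨b₁, b₂, hne⟩ := exists_pair_ne (IsFreeGroup.Generators H)
    let c : IsFreeGroup.Generators H → Fin 2 := fun b => if b = b₁ then 0 else 1
    have hc : Function.Surjective c := by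
      intro t
      fin_cases t
      · exact ⟨b₁, if_pos rfl⟩
      · exact ⟨b₂, if_neg hne.symm⟩
    exact .inl ⟨(FreeGroup.map c).comp e.toMonoidHom,
      (FreeGroup.map_surjective hc).comp e.surjective⟩

theorem subsingleton_or_nonempty_mulEquiv_of_surjective {S : Type*} [Group S]
    (hS : ∀ s : S, IsOfFinOrder s → s = 1)
    (f : Multiplicative (ℤ × ℤ) →* S) (hf : Function.Surjective f) :
    Subsingleton S ∨ Nonempty (S ≃* Multiplicative ℤ) ∨
      Nonempty (S ≃* Multiplicative (ℤ × ℤ)) := by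
  let : CommGroup S :=
    { mul_comm a b := by
        obtain ⟨a, rfl⟩ := hf a
        obtain ⟨b, rfl⟩ := hf b
        rw [← map_mul, mul_comm, map_mul] }
  have : IsMulTorsionFree S :=
    isMulTorsionFree_iff_not_isOfFinOrder.mpr fun s hs hfin => hs (hS s hfin)
  let g : ℤ × ℤ →ₗ[ℤ] Additive S := (MonoidHom.toAdditiveRight f).toIntLinearMap
  have hg : Function.Surjective g := hf
  have : Module.Finite ℤ (Additive S) := Module.Finite.of_surjective g hg
  have hrank : Module.finrank ℤ (Additive S) ≤ 2 := by
    have := g.finrank_range_le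
    rwa [LinearMap.range_eq_top.mpr hg, finrank_top, Module.finrank_prod,
      Module.finrank_self] at this
  interval_cases h : Module.finrank ℤ (Additive S)
  · exact .inl (Module.finrank_zero_iff.mp h : Subsingleton (Additive S))
  · exact .inr (.inl ⟨AddEquiv.toMultiplicativeRight
      (LinearEquiv.ofFinrankEq (R := ℤ) _ ℤ (by simpa)).toAddEquiv⟩)
  · exact .inr (.inr ⟨AddEquiv.toMultiplicativeRight
      (LinearEquiv.ofFinrankEq (R := ℤ) _ (ℤ × ℤ) (by simpa)).toAddEquiv⟩)

section CentralExtension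

variable {G H : Type*} [Group G] [Group H] {φ : G →* H} {z : G}

theorem eq_one_of_isOfFinOrder_of_ker_le_zpowers [IsMulTorsionFree H] (hz : ¬IsOfFinOrder z)
    (hker : φ.ker ≤ Subgroup.zpowers z) {g : G} (hg : IsOfFinOrder g) : g = 1 := by
  obtain ⟨m, rfl⟩ := Subgroup.mem_zpowers_iff.mp (hker (φ.isOfFinOrder hg).eq_one')
  obtain ⟨n, hn, hzn⟩ := isOfFinOrder_iff_zpow_eq_one.mp hg
  rw [← zpow_mul, ← zpow_zero z] at hzn
  rw [(mul_eq_zero.mp (injective_zpow_iff_not_isOfFinOrder.mpr hz hzn)).resolve_right hn,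
    zpow_zero]

theorem exists_surjective_of_isCyclic_map (hz : ∀ g, Commute z g)
    (hker : φ.ker ≤ Subgroup.zpowers z) (S : Subgroup G) [IsCyclic (S.map φ)] :
    ∃ f : Multiplicative (ℤ × ℤ) →* S, Function.Surjective f := by
  obtain ⟨⟨_, g, hgS, rfl⟩, hg⟩ := IsCyclic.exists_generator (α := S.map φ)
  obtain ⟨⟨m, hmS⟩, hm⟩ := IsCyclic.exists_generator (α := S.comap (zpowersHom G z))
  have hcomm : Commute (⟨_, hmS⟩ : S) ⟨g, hgS⟩ := Subtype.ext ((hz g).zpow_left _)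
  let f : Multiplicative (ℤ × ℤ) →* S :=
    (MonoidHom.noncommCoprod (zpowersHom S ⟨_, hmS⟩) (zpowersHom S ⟨g, hgS⟩)
      fun a b => hcomm.zpow_zpow _ _).comp
      (MulEquiv.prodMultiplicative (G := ℤ) (H := ℤ)).toMonoidHom
  refine ⟨f, fun s => ?_⟩
  obtain ⟨n, hn⟩ := Subgroup.mem_zpowers_iff.mp (hg ⟨φ s, Subgroup.mem_map_of_mem φ s.2⟩)
  have hφs : φ g ^ n = φ s := by simpa using congrArg Subtype.val hn
  have hker' : (s : G) * g ^ (-n) ∈ φ.ker := by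
    rw [MonoidHom.mem_ker, map_mul, map_zpow, ← hφs, zpow_neg, mul_inv_cancel]
  obtain ⟨r, hr⟩ := Subgroup.mem_zpowers_iff.mp (hker hker')
  have hrS : Multiplicative.ofAdd r ∈ S.comap (zpowersHom G z) := by
    simpa [hr] using S.mul_mem s.2 (S.zpow_mem hgS (-n))
  obtain ⟨t, ht⟩ := Subgroup.mem_zpowers_iff.mp (hm ⟨_, hrS⟩)
  refine ⟨.ofAdd (t, n), Subtype.ext ?_⟩
  have ht' := congrArg (fun x => zpowersHom G z x.1) ht
  simp only [SubgroupClass.coe_zpow, map_zpow, zpowersHom_apply, toAdd_ofAdd] at ht'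
  simp [f, ht', hr]

theorem strongest_tits_of_ker_le_zpowers {α : Type*} {φ : G →* FreeGroup α}
    (hz : ∀ g, Commute z g) (hz_fin : ¬IsOfFinOrder z) (hker : φ.ker ≤ Subgroup.zpowers z)
    (S : Subgroup G) :
    (∃ f : S →* FreeGroup (Fin 2), Function.Surjective f) ∨
      S = ⊥ ∨ Nonempty (S ≃* Multiplicative ℤ) ∨ Nonempty (S ≃* Multiplicative (ℤ × ℤ)) := by
  rcases IsFreeGroup.exists_surjective_freeGroup_fin_two_or_isCyclic (S.map φ) with ⟨f, hf⟩ | hcyc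
  · exact .inl ⟨f.comp (φ.subgroupMap S), hf.comp (φ.subgroupMap_surjective S)⟩
  obtain ⟨f, hf⟩ := exists_surjective_of_isCyclic_map hz hker S
  have hS (s : S) (hs : IsOfFinOrder s) : s = 1 :=
    Subtype.ext (eq_one_of_isOfFinOrder_of_ker_le_zpowers hz_fin hker (S.subtype.isOfFinOrder hs))
  rcases subsingleton_or_nonempty_mulEquiv_of_surjective hS f hf with h | h
  · exact .inr (.inl S.eq_bot_of_subsingleton)
  · exact .inr (.inr h)

end CentralExtension

namespace rels4

variable {i j k l : ℤ}

local notation "𝔾" => PresentedGroup (rels4 i j k l)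
local notation "𝕩" => (PresentedGroup.of 0 : 𝔾)
local notation "𝕪" => (PresentedGroup.of 1 : 𝔾)
local notation "𝕒" => (PresentedGroup.of 2 : 𝔾)
local notation "𝕓" => (PresentedGroup.of 3 : 𝔾)

theorem lift_eq_one {M : Type*} [Group M] {x y a b : M} (hxy : Commute x y) (hab : Commute a b)
    (h : x ^ i * y ^ j = a ^ k * b ^ l) :
    ∀ r ∈ rels4 i j k l, FreeGroup.lift ![x, y, a, b] r = 1 := by
  rintro r (rfl | rfl | rfl) <;>
    simp [x4, y4, a4, b4, hxy.eq, hab.eq, h]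

theorem commute_x_y : Commute 𝕩 𝕪 :=
  mul_inv_eq_one.mp <| PresentedGroup.one_of_mem (rels := rels4 i j k l)
    (x := x4 * y4 * (y4 * x4)⁻¹) (by simp [rels4])

theorem commute_a_b : Commute 𝕒 𝕓 :=
  mul_inv_eq_one.mp <| PresentedGroup.one_of_mem (rels := rels4 i j k l)
    (x := a4 * b4 * (b4 * a4)⁻¹) (by simp [rels4])

theorem edge_eq : 𝕩 ^ i * 𝕪 ^ j = 𝕒 ^ k * 𝕓 ^ l :=
  mul_inv_eq_one.mp <| PresentedGroup.one_of_mem (rels := rels4 i j k l)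
    (x := x4 ^ i * y4 ^ j * (a4 ^ k * b4 ^ l)⁻¹) (by simp [rels4])

theorem commute_edge (g : 𝔾) : Commute (𝕩 ^ i * 𝕪 ^ j) g := by
  suffices g ∈ Subgroup.centralizer {𝕩 ^ i * 𝕪 ^ j} from
    (Subgroup.mem_centralizer_singleton_iff.mp this).symm
  refine PresentedGroup.generated_by _ _ (fun t => Subgroup.mem_centralizer_singleton_iff.mpr ?_) g
  fin_cases t
  · exact (((Commute.refl _).zpow_right i).mul_right (commute_x_y.zpow_right j)).eq
  · exact ((commute_x_y.symm.zpow_right i).mul_right ((Commute.refl _).zpow_right j)).eq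
  · rw [edge_eq]
    exact (((Commute.refl _).zpow_right k).mul_right (commute_a_b.zpow_right l)).eq
  · rw [edge_eq]
    exact ((commute_a_b.symm.zpow_right k).mul_right ((Commute.refl _).zpow_right l)).eq

-- On each vertex group this is `ℤ² → ℤ, (m, n) ↦ j m - i n`, whose kernel is the edge group.
variable (i j k l) in
noncomputable def toFreeGroup : 𝔾 →* FreeGroup (Fin 2) :=
  PresentedGroup.toGroup <| lift_eq_one
    (x := FreeGroup.of 0 ^ j) (y := FreeGroup.of 0 ^ (-i))
    (a := FreeGroup.of 1 ^ l) (b := FreeGroup.of 1 ^ (-k))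
    (Commute.zpow_zpow_self _ _ _) (Commute.zpow_zpow_self _ _ _) (by group)

theorem ker_toFreeGroup_le (hij : IsCoprime i j) (hkl : IsCoprime k l) :
    (toFreeGroup i j k l).ker ≤ Subgroup.zpowers (𝕩 ^ i * 𝕪 ^ j) := by
  obtain ⟨p, q, hpq⟩ := hij
  obtain ⟨p', q', hpq'⟩ := hkl
  set N := Subgroup.zpowers (𝕩 ^ i * 𝕪 ^ j)
  have : N.Normal := Subgroup.normal_zpowers_of_commute fun g => commute_edge g
  have hmk (g : 𝔾) (n : ℤ) : ((g * (𝕩 ^ i * 𝕪 ^ j) ^ n : 𝔾) : 𝔾 ⧸ N) = g := by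
    rw [QuotientGroup.mk_mul, (QuotientGroup.eq_one_iff _).mpr (Subgroup.zpow_mem_zpowers _ n),
      mul_one]
  -- `x ^ q * y ^ (-p)` generates the vertex group `⟨x, y⟩` modulo the edge group.
  let ψ : FreeGroup (Fin 2) →* 𝔾 ⧸ N :=
    FreeGroup.lift ![((𝕩 ^ q * 𝕪 ^ (-p) : 𝔾) : 𝔾 ⧸ N), ((𝕒 ^ q' * 𝕓 ^ (-p') : 𝔾) : 𝔾 ⧸ N)]
  have hψ : ψ.comp (toFreeGroup i j k l) = QuotientGroup.mk' N := by
    ext t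
    fin_cases t <;>
      simp only [toFreeGroup, ψ, MonoidHom.coe_comp, Function.comp_apply, PresentedGroup.toGroup.of,
        QuotientGroup.mk'_apply, Fin.reduceFinMk, Matrix.cons_val, map_zpow,
        FreeGroup.lift_apply_of, ← QuotientGroup.mk_zpow]
    · rw [commute_x_y.zpow_bezout_mul_zpow_left hpq, hmk]
    · rw [commute_x_y.zpow_bezout_mul_zpow_right hpq, hmk]
    · rw [commute_a_b.zpow_bezout_mul_zpow_left hpq', ← edge_eq, hmk]
    · rw [commute_a_b.zpow_bezout_mul_zpow_right hpq', ← edge_eq, hmk]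
  intro g hg
  rw [← QuotientGroup.eq_one_iff, ← QuotientGroup.mk'_apply, ← hψ, MonoidHom.comp_apply, hg,
    map_one]

theorem not_isOfFinOrder_edge (hij : IsCoprime i j) (hkl : IsCoprime k l) :
    ¬IsOfFinOrder (𝕩 ^ i * 𝕪 ^ j) := by
  obtain ⟨p, q, hpq⟩ := hij
  obtain ⟨p', q', hpq'⟩ := hkl
  let χ : 𝔾 →* Multiplicative ℤ := PresentedGroup.toGroup <| lift_eq_one
    (x := .ofAdd p) (y := .ofAdd q) (a := .ofAdd p') (b := .ofAdd q') (.all _ _) (.all _ _)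
    (Multiplicative.toAdd.injective (by simp; linear_combination hpq - hpq'))
  have hχ : χ (𝕩 ^ i * 𝕪 ^ j) = .ofAdd 1 :=
    Multiplicative.toAdd.injective (by simp [χ]; linear_combination hpq)
  intro h
  have := χ.isOfFinOrder h
  rw [hχ, isOfFinOrder_iff_eq_one] at this
  exact one_ne_zero (ofAdd_eq_one.mp this)

end rels4

/-- The two-vertex-tree instance of Theorem 3.7 / Theorem 3.2: for the amalgam of two
copies of ℤ² over a maximal cyclic subgroup on each side, every subgroup either surjects
the free group `F₂` or is trivial, infinite cyclic, or isomorphic to ℤ². -/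
theorem two_vertex_strongest_Tits (i j k l : ℤ)
    (hij : Int.gcd i j = 1) (hkl : Int.gcd k l = 1) :
    ∀ S : Subgroup (PresentedGroup (rels4 i j k l)),
      (∃ f : S →* FreeGroup (Fin 2), Function.Surjective f) ∨
      S = ⊥ ∨ Nonempty (S ≃* Multiplicative ℤ) ∨
      Nonempty (S ≃* Multiplicative (ℤ × ℤ)) := by
  have hij' := Int.isCoprime_iff_gcd_eq_one.mpr hij
  have hkl' := Int.isCoprime_iff_gcd_eq_one.mpr hkl
  exact strongest_tits_of_ker_le_zpowers rels4.commute_edge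
    (rels4.not_isOfFinOrder_edge hij' hkl') (rels4.ker_toFreeGroup_le hij' hkl')
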